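/- The fundamental Scherk parametrization is an isothermal (conformal) immersion: at every (u,v) ∈ Ω₀ with u²+v² ≠ 1 one has σ_u·σ_v = 0 and σ_u·σ_u = σ_v·σ_v > 0. -/

import Mathlib

noncomputable section
open MeasureTheory Real

/-- Dot product on `ℝ³ = ℝ × ℝ × ℝ`. -/
def dot3 (a b : ℝ × ℝ × ℝ) : ℝ := a.1 * b.1 + a.2.1 * b.2.1 + a.2.2 * b.2.2

/-- Cross product on `ℝ³ = ℝ × ℝ × ℝ`. -/
def cross3 (a b : ℝ × ℝ × ℝ) : ℝ × ℝ × ℝ :=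
  (a.2.1 * b.2.2 - a.2.2 * b.2.1, a.2.2 * b.1 - a.1 * b.2.2, a.1 * b.2.1 - a.2.1 * b.1)

/-- Euclidean norm on `ℝ³ = ℝ × ℝ × ℝ`. -/
def norm3 (a : ℝ × ℝ × ℝ) : ℝ := Real.sqrt (dot3 a a)

/-- Partial derivative in the first (`u`) variable. -/
def pdU {E : Type*} [NormedAddCommGroup E] [NormedSpace ℝ E] (f : ℝ × ℝ → E) (p : ℝ × ℝ) : E :=
  deriv (fun x => f (x, p.2)) p.1

/-- Partial derivative in the second (`v`) variable. -/
def pdV {E : Type*} [NormedAddCommGroup E] [NormedSpace ℝ E] (f : ℝ × ℝ → E) (p : ℝ × ℝ) : E :=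
  deriv (fun y => f (p.1, y)) p.2

/-- The fundamental domain `Ω₀ = (-1,1) × (-1,1)`. -/
def Ω₀ : Set (ℝ × ℝ) := Set.Ioo (-1 : ℝ) 1 ×ˢ Set.Ioo (-1 : ℝ) 1

/-- The fundamental Scherk parametrization. -/
def scherk (p : ℝ × ℝ) : ℝ × ℝ × ℝ :=
  (arctan (2 * p.1 / (p.1 ^ 2 + p.2 ^ 2 - 1)),
   arctan (-2 * p.2 / (p.1 ^ 2 + p.2 ^ 2 - 1)),
   (1 / 2) * Real.log (((p.1 ^ 2 - p.2 ^ 2 + 1) ^ 2 + 4 * p.1 ^ 2 * p.2 ^ 2) /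
     ((p.1 ^ 2 - p.2 ^ 2 - 1) ^ 2 + 4 * p.1 ^ 2 * p.2 ^ 2)))

def σu : ℝ × ℝ → ℝ × ℝ × ℝ := pdU scherk
def σv : ℝ × ℝ → ℝ × ℝ × ℝ := pdV scherk
def σuu : ℝ × ℝ → ℝ × ℝ × ℝ := pdU σu
def σuv : ℝ × ℝ → ℝ × ℝ × ℝ := pdV σu
def σvv : ℝ × ℝ → ℝ × ℝ × ℝ := pdV σv

/-- First fundamental form. -/
def g11 (p : ℝ × ℝ) : ℝ := dot3 (σu p) (σu p)
def g12 (p : ℝ × ℝ) : ℝ := dot3 (σu p) (σv p)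
def g22 (p : ℝ × ℝ) : ℝ := dot3 (σv p) (σv p)

def detg (p : ℝ × ℝ) : ℝ := g11 p * g22 p - g12 p ^ 2

/-- Components of the inverse metric `(gⁱʲ)`. -/
def ginv11 (p : ℝ × ℝ) : ℝ := g22 p / detg p
def ginv12 (p : ℝ × ℝ) : ℝ := -g12 p / detg p
def ginv22 (p : ℝ × ℝ) : ℝ := g11 p / detg p

/-- Unit normal `N = (σ_u × σ_v)/‖σ_u × σ_v‖`. -/
def NS (p : ℝ × ℝ) : ℝ × ℝ × ℝ :=
  (norm3 (cross3 (σu p) (σv p)))⁻¹ • cross3 (σu p) (σv p)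

/-- Second fundamental form. -/
def h11 (p : ℝ × ℝ) : ℝ := dot3 (σuu p) (NS p)
def h12 (p : ℝ × ℝ) : ℝ := dot3 (σuv p) (NS p)
def h22 (p : ℝ × ℝ) : ℝ := dot3 (σvv p) (NS p)

/-- Gaussian curvature. -/
def κ (p : ℝ × ℝ) : ℝ := (h11 p * h22 p - h12 p ^ 2) / detg p

/-- The second-variation quadratic form of the fundamental Scherk surface. -/
def Q (φ : ℝ × ℝ → ℝ) : ℝ :=
  ∫ p in Ω₀,
    (ginv11 p * pdU φ p ^ 2 + 2 * ginv12 p * pdU φ p * pdV φ p + ginv22 p * pdV φ p ^ 2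
      + 2 * κ p * φ p ^ 2) * Real.sqrt (detg p)

/-- The polarized second-variation bilinear form. -/
def B (φ ψ : ℝ × ℝ → ℝ) : ℝ :=
  ∫ p in Ω₀,
    (ginv11 p * pdU φ p * pdU ψ p + ginv12 p * pdU φ p * pdV ψ p
      + ginv12 p * pdV φ p * pdU ψ p + ginv22 p * pdV φ p * pdV ψ p
      + 2 * κ p * φ p * ψ p) * Real.sqrt (detg p)

/-- The test functions `φ¹, φ², φ³`. -/
def Φ : Fin 3 → (ℝ × ℝ → ℝ) :=
  ![fun p => (p.1 * p.2) ^ 2 + 2,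
    fun p => p.1 - p.1 ^ 5 / 4,
    fun p => p.2 - p.2 ^ 5 / 4]

/-! With `z = u + iv`, the two arguments of the logarithm are
`|z² + 1|² = (u² + v² - 1)² + 4u²` and `|z² - 1|² = (u² + v² - 1)² + 4v²`, and these are the only
denominators in `σ_u`. Swapping `u` and `v` turns `σ` into minus a permutation of its coordinates,
so `σ_v (u, v)` can be read off from `σ_u (v, u)`. After that, `σ_u · σ_v = 0` is a polynomial
identity, and `|σ_u|² = |σ_v|² = 4 (1 + |z|²)² / (|z² + 1|² |z² - 1|²)`. This is positive away
from the unit circle. -/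

theorem HasDerivAt.arctan_div {n d : ℝ → ℝ} {n' d' x : ℝ} (hn : HasDerivAt n n' x)
    (hd : HasDerivAt d d' x) (hx : d x ≠ 0) :
    HasDerivAt (fun t => Real.arctan (n t / d t))
      ((n' * d x - n x * d') / (d x ^ 2 + n x ^ 2)) x :=
  (hn.fun_div hd hx).arctan.congr_deriv <| by field_simp

theorem HasDerivAt.log_div {p q : ℝ → ℝ} {p' q' x : ℝ} (hp : HasDerivAt p p' x)
    (hq : HasDerivAt q q' x) (hpx : p x ≠ 0) (hqx : q x ≠ 0) :
    HasDerivAt (fun t => Real.log (p t / q t)) (p' / p x - q' / q x) x :=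
  ((hp.fun_div hq hqx).log (div_ne_zero hpx hqx)).congr_deriv <| by field_simp

def scherkDerivFst (u v : ℝ) : ℝ × ℝ × ℝ :=
  (-2 * (u ^ 2 - v ^ 2 + 1) / ((u ^ 2 + v ^ 2 - 1) ^ 2 + 4 * u ^ 2),
    4 * u * v / ((u ^ 2 + v ^ 2 - 1) ^ 2 + 4 * v ^ 2),
    2 * u * (u ^ 2 + v ^ 2 + 1) / ((u ^ 2 + v ^ 2 - 1) ^ 2 + 4 * u ^ 2)
      - 2 * u * (u ^ 2 + v ^ 2 - 1) / ((u ^ 2 + v ^ 2 - 1) ^ 2 + 4 * v ^ 2))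

theorem scherk_hasDerivAt_fst {u v : ℝ} (h : u ^ 2 + v ^ 2 ≠ 1) :
    HasDerivAt (fun x => scherk (x, v)) (scherkDerivFst u v) u := by
  have hD : u ^ 2 + v ^ 2 - 1 ≠ 0 := sub_ne_zero.mpr h
  have hd : HasDerivAt (fun x => x ^ 2 + v ^ 2 - 1) (2 * u) u := by
    simpa using ((hasDerivAt_pow 2 u).add_const (v ^ 2)).sub_const 1
  have hP : HasDerivAt (fun x => (x ^ 2 - v ^ 2 + 1) ^ 2 + 4 * x ^ 2 * v ^ 2)
      (4 * u * (u ^ 2 + v ^ 2 + 1)) u := by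
    refine ((((hasDerivAt_pow 2 u).sub_const (v ^ 2)).add_const 1).fun_pow 2).add
      (((hasDerivAt_pow 2 u).const_mul 4).mul_const (v ^ 2)) |>.congr_deriv ?_
    norm_num
    ring
  have hQ : HasDerivAt (fun x => (x ^ 2 - v ^ 2 - 1) ^ 2 + 4 * x ^ 2 * v ^ 2)
      (4 * u * (u ^ 2 + v ^ 2 - 1)) u := by
    refine ((((hasDerivAt_pow 2 u).sub_const (v ^ 2)).sub_const 1).fun_pow 2).add
      (((hasDerivAt_pow 2 u).const_mul 4).mul_const (v ^ 2)) |>.congr_deriv ?_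
    norm_num
    ring
  have hP_eq : (u ^ 2 - v ^ 2 + 1) ^ 2 + 4 * u ^ 2 * v ^ 2
      = (u ^ 2 + v ^ 2 - 1) ^ 2 + 4 * u ^ 2 := by ring
  have hQ_eq : (u ^ 2 - v ^ 2 - 1) ^ 2 + 4 * u ^ 2 * v ^ 2
      = (u ^ 2 + v ^ 2 - 1) ^ 2 + 4 * v ^ 2 := by ring
  have h1 := HasDerivAt.arctan_div ((hasDerivAt_id u).const_mul 2) hd hD
  have h2 := HasDerivAt.arctan_div (hasDerivAt_const u (-2 * v)) hd hD
  have h3 := (HasDerivAt.log_div hP hQ (by simp only [hP_eq]; positivity)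
    (by simp only [hQ_eq]; positivity)).const_mul (1 / 2)
  refine (h1.prodMk (h2.prodMk h3)).congr_deriv ?_
  simp only [scherkDerivFst, id, hP_eq, hQ_eq, Prod.mk.injEq]
  refine ⟨?_, ?_, ?_⟩ <;> field_simp <;> ring

theorem scherk_swap (u v : ℝ) :
    scherk (v, u) = (-(scherk (u, v)).2.1, -(scherk (u, v)).1, -(scherk (u, v)).2.2) := by
  have hlog : ((v ^ 2 - u ^ 2 + 1) ^ 2 + 4 * v ^ 2 * u ^ 2) /
        ((v ^ 2 - u ^ 2 - 1) ^ 2 + 4 * v ^ 2 * u ^ 2)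
      = (((u ^ 2 - v ^ 2 + 1) ^ 2 + 4 * u ^ 2 * v ^ 2) /
        ((u ^ 2 - v ^ 2 - 1) ^ 2 + 4 * u ^ 2 * v ^ 2))⁻¹ := by
    rw [inv_div]
    ring
  simp only [scherk, hlog, Real.log_inv, neg_mul, neg_div, arctan_neg, neg_neg, mul_neg,
    add_comm (v ^ 2)]

theorem scherk_hasDerivAt_snd {u v : ℝ} (h : u ^ 2 + v ^ 2 ≠ 1) :
    HasDerivAt (fun y => scherk (u, y))
      (-(scherkDerivFst v u).2.1, -(scherkDerivFst v u).1, -(scherkDerivFst v u).2.2) v := by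
  have H := scherk_hasDerivAt_fst (u := v) (v := u) (by rwa [add_comm])
  have H₁ := hasFDerivAt_fst.comp_hasDerivAt v H
  have H₂ := hasFDerivAt_fst.comp_hasDerivAt v (hasFDerivAt_snd.comp_hasDerivAt v H)
  have H₃ := hasFDerivAt_snd.comp_hasDerivAt v (hasFDerivAt_snd.comp_hasDerivAt v H)
  rw [funext fun y => scherk_swap y u]
  exact H₂.neg.prodMk (H₁.neg.prodMk H₃.neg)

theorem σu_eq {u v : ℝ} (h : u ^ 2 + v ^ 2 ≠ 1) : σu (u, v) = scherkDerivFst u v :=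
  (scherk_hasDerivAt_fst h).deriv

theorem σv_eq {u v : ℝ} (h : u ^ 2 + v ^ 2 ≠ 1) :
    σv (u, v) = (-(scherkDerivFst v u).2.1, -(scherkDerivFst v u).1, -(scherkDerivFst v u).2.2) :=
  (scherk_hasDerivAt_snd h).deriv

def scherkConformalFactor (u v : ℝ) : ℝ :=
  4 * (u ^ 2 + v ^ 2 + 1) ^ 2 /
    (((u ^ 2 + v ^ 2 - 1) ^ 2 + 4 * u ^ 2) * ((u ^ 2 + v ^ 2 - 1) ^ 2 + 4 * v ^ 2))

theorem scherkConformalFactor_comm (u v : ℝ) :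
    scherkConformalFactor v u = scherkConformalFactor u v := by
  simp only [scherkConformalFactor, add_comm (v ^ 2),
    mul_comm ((u ^ 2 + v ^ 2 - 1) ^ 2 + 4 * v ^ 2)]

theorem scherkConformalFactor_pos {u v : ℝ} (h : u ^ 2 + v ^ 2 ≠ 1) :
    0 < scherkConformalFactor u v := by
  have hD : u ^ 2 + v ^ 2 - 1 ≠ 0 := sub_ne_zero.mpr h
  unfold scherkConformalFactor
  positivity

theorem g11_eq {u v : ℝ} (h : u ^ 2 + v ^ 2 ≠ 1) : g11 (u, v) = scherkConformalFactor u v := by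
  have hD : u ^ 2 + v ^ 2 - 1 ≠ 0 := sub_ne_zero.mpr h
  rw [g11, σu_eq h]
  simp only [dot3, scherkDerivFst, scherkConformalFactor]
  field_simp
  ring

theorem g22_eq {u v : ℝ} (h : u ^ 2 + v ^ 2 ≠ 1) : g22 (u, v) = scherkConformalFactor u v := by
  have h' : v ^ 2 + u ^ 2 ≠ 1 := by rwa [add_comm]
  rw [← scherkConformalFactor_comm, ← g11_eq h', g22, g11, σv_eq h, σu_eq h']
  simp only [dot3]
  ring

theorem g12_eq_zero {u v : ℝ} (h : u ^ 2 + v ^ 2 ≠ 1) : g12 (u, v) = 0 := by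
  have hD : u ^ 2 + v ^ 2 - 1 ≠ 0 := sub_ne_zero.mpr h
  rw [g12, σu_eq h, σv_eq h]
  simp only [dot3, scherkDerivFst, add_comm (v ^ 2)]
  field_simp
  ring

/-- the fundamental Scherk parametrization is an isothermal (conformal)
immersion: `σ_u·σ_v = 0` and `σ_u·σ_u = σ_v·σ_v > 0` on `Ω₀` away from the unit circle. -/
theorem scherk_isothermal :
    ∀ p ∈ Ω₀, p.1 ^ 2 + p.2 ^ 2 ≠ 1 →
      g12 p = 0 ∧ g11 p = g22 p ∧ 0 < g11 p := by
  rintro ⟨u, v⟩ - h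
  refine ⟨g12_eq_zero h, ?_, ?_⟩
  · rw [g11_eq h, g22_eq h]
  · rw [g11_eq h]
    exact scherkConformalFactor_pos h
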